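/- There is a function f(n, N) such that for all integers n > 3 and N > 3, every connected graph G of diameter at most N that contains no induced K_{1,n} and no induced K̃_n^p for any p ≥ 1 satisfies def(G) ≤ f(n, N). -/

import Mathlib

open SimpleGraph

/-- The deficiency of a finite graph: number of vertices missed by a maximum matching,
i.e. `|V(G)| - 2ν(G)`. -/
noncomputable def deficiency {V : Type*} [Fintype V] (G : SimpleGraph V) : ℕ :=
  Fintype.card V - sSup {k : ℕ | ∃ M : G.Subgraph, M.IsMatching ∧ M.verts.ncard = k}

/-- The star `K_{1,n}`. -/
def starGraph (n : ℕ) : SimpleGraph (Unit ⊕ Fin n) := completeBipartiteGraph Unit (Fin n)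

/-- `T n`: the graph obtained by attaching two copies of `P₂` at one end of a path `Pₙ`
(the vertices of the path are `Sum.inl 0, …, Sum.inl (n-1)`; the branch vertex is
`Sum.inl (n-1)` and the end of `T n` is `Sum.inl 0`). -/
def Tgraph (n : ℕ) : SimpleGraph (Fin n ⊕ Fin 2) :=
  SimpleGraph.fromRel (fun a b =>
    match a, b with
    | Sum.inl i, Sum.inl j => (i : ℕ) + 1 = (j : ℕ)
    | Sum.inl i, Sum.inr _ => (i : ℕ) = n - 1
    | _, _ => False)

/-- The end vertex of (a copy of) `T p`. -/
def isTEnd {p : ℕ} : Fin p ⊕ Fin 2 → Prop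
  | Sum.inl i => (i : ℕ) = 0
  | Sum.inr _ => False

/-- `K̃ₙᵖ`: the graph obtained by attaching a copy of `T p` at each vertex of the
complete graph `Kₙ`, identifying each vertex of `Kₙ` with the end of its copy of `T p`. -/
def Ktilde (n p : ℕ) : SimpleGraph (Fin n × (Fin p ⊕ Fin 2)) :=
  SimpleGraph.fromRel (fun a b =>
    (a.1 = b.1 ∧ (Tgraph p).Adj a.2 b.2) ∨
    (a.1 ≠ b.1 ∧ isTEnd a.2 ∧ isTEnd b.2))

/-- `Fₙ¹`: the path `P_{2n+1}` with a pendant vertex attached at its center. -/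
def F1 (n : ℕ) : SimpleGraph (Fin (2 * n + 1) ⊕ Unit) :=
  SimpleGraph.fromRel (fun a b =>
    match a, b with
    | Sum.inl i, Sum.inl j => (i : ℕ) + 1 = (j : ℕ)
    | Sum.inl i, Sum.inr _ => (i : ℕ) = n
    | _, _ => False)

/-- `Fₙ²`: the triangle `K₃` with a copy of `Pₙ` attached at each vertex
(the triangle vertices are `(i, 0)`). -/
def F2 (n : ℕ) : SimpleGraph (Fin 3 × Fin n) :=
  SimpleGraph.fromRel (fun a b =>
    (a.1 = b.1 ∧ (a.2 : ℕ) + 1 = (b.2 : ℕ)) ∨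
    (a.1 ≠ b.1 ∧ (a.2 : ℕ) = 0 ∧ (b.2 : ℕ) = 0))

/-- `Fₙ³`: the cycle `C₄` with a copy of `Pₙ` attached at each of two nonadjacent
vertices. The two paths are `(k, 0), …, (k, n-1)` for `k : Fin 2`; the two other cycle
vertices are `Sum.inr 0` and `Sum.inr 1`, each adjacent to `(0,0)` and `(1,0)`. -/
def F3 (n : ℕ) : SimpleGraph ((Fin 2 × Fin n) ⊕ Fin 2) :=
  SimpleGraph.fromRel (fun a b =>
    match a, b with
    | Sum.inl (k, i), Sum.inl (k', i') => k = k' ∧ (i : ℕ) + 1 = (i' : ℕ)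
    | Sum.inl (_, i), Sum.inr _ => (i : ℕ) = 0
    | _, _ => False)

/-- `Fₙ⁴`: `Fₙ³` together with the edge joining its two vertices of degree 3. -/
def F4 (n : ℕ) : SimpleGraph ((Fin 2 × Fin n) ⊕ Fin 2) :=
  SimpleGraph.fromRel (fun a b =>
    match a, b with
    | Sum.inl (k, i), Sum.inl (k', i') =>
        (k = k' ∧ (i : ℕ) + 1 = (i' : ℕ)) ∨ (k ≠ k' ∧ (i : ℕ) = 0 ∧ (i' : ℕ) = 0)
    | Sum.inl (_, i), Sum.inr _ => (i : ℕ) = 0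
    | _, _ => False)

/-- `F̃ₙᵖ`: the triangle `K₃` with a copy of `T p` attached (by its end) at one vertex and
a copy of `Pₙ` attached at each of the other two vertices. -/
def Ftilde (n p : ℕ) : SimpleGraph ((Fin p ⊕ Fin 2) ⊕ (Fin 2 × Fin n)) :=
  SimpleGraph.fromRel (fun a b =>
    match a, b with
    | Sum.inl x, Sum.inl y => (Tgraph p).Adj x y
    | Sum.inl x, Sum.inr (_, i) => isTEnd x ∧ (i : ℕ) = 0
    | Sum.inr (k, i), Sum.inr (k', i') =>
        (k = k' ∧ (i : ℕ) + 1 = (i' : ℕ)) ∨ (k ≠ k' ∧ (i : ℕ) = 0 ∧ (i' : ℕ) = 0)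
    | _, _ => False)

/-- `Bᵢ`: the graph obtained by attaching two copies of `P₂` at the end of `T_{i+2}`. -/
def Bgraph (i : ℕ) : SimpleGraph ((Fin (i + 2) ⊕ Fin 2) ⊕ Fin 2) :=
  SimpleGraph.fromRel (fun a b =>
    match a, b with
    | Sum.inl x, Sum.inl y => (Tgraph (i + 2)).Adj x y
    | Sum.inl x, Sum.inr _ => isTEnd x
    | _, _ => False)

/-- `H¹_{s,t}`: the union of `s+1` disjoint paths `Qᵢ` on `t` vertices (vertices `(i, j)`)
together with new vertices `vᵢ = (i, 0)` and `wᵢ = (i, 1)` (for `i : Fin s`) and the edges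
`vᵢwᵢ`, `vᵢ uᵢᵗ`, `vᵢ u_{i+1}¹`. -/
def H1graph (s t : ℕ) : SimpleGraph ((Fin (s + 1) × Fin t) ⊕ (Fin s × Fin 2)) :=
  SimpleGraph.fromRel (fun a b =>
    match a, b with
    | Sum.inl (i, j), Sum.inl (i', j') => i = i' ∧ (j : ℕ) + 1 = (j' : ℕ)
    | Sum.inl (i, j), Sum.inr (k, l) =>
        (l : ℕ) = 0 ∧ (((i : ℕ) = (k : ℕ) ∧ (j : ℕ) = t - 1) ∨
          ((i : ℕ) = (k : ℕ) + 1 ∧ (j : ℕ) = 0))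
    | Sum.inr (k, l), Sum.inr (k', l') => k = k' ∧ l ≠ l'
    | _, _ => False)

/-- `H³_{s,t}`: the union of `s+1` disjoint paths `Qᵢ` on `t` vertices together with new
vertices `vᵢ, wᵢ` (`i : Fin s`), `x = Sum.inr (Sum.inr 0)`, `y = Sum.inr (Sum.inr 1)`, and
the edges `x u₁¹`, `u_{s+1}ᵗ y`, and `vᵢ uᵢᵗ`, `vᵢ u_{i+1}¹`, `wᵢ uᵢᵗ`, `wᵢ u_{i+1}¹`. -/
def H3graph (s t : ℕ) :
    SimpleGraph ((Fin (s + 1) × Fin t) ⊕ ((Fin s × Fin 2) ⊕ Fin 2)) :=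
  SimpleGraph.fromRel (fun a b =>
    match a, b with
    | Sum.inl (i, j), Sum.inl (i', j') => i = i' ∧ (j : ℕ) + 1 = (j' : ℕ)
    | Sum.inl (i, j), Sum.inr (Sum.inl (k, _)) =>
        ((i : ℕ) = (k : ℕ) ∧ (j : ℕ) = t - 1) ∨ ((i : ℕ) = (k : ℕ) + 1 ∧ (j : ℕ) = 0)
    | Sum.inl (i, j), Sum.inr (Sum.inr m) =>
        ((m : ℕ) = 0 ∧ (i : ℕ) = 0 ∧ (j : ℕ) = 0) ∨
          ((m : ℕ) = 1 ∧ (i : ℕ) = s ∧ (j : ℕ) = t - 1)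
    | _, _ => False)

/-- `H⁴_{s,t}`: `H³_{s,t}` together with the edges `uᵢᵗ u_{i+1}¹` for `i ∈ [s]`. -/
def H4graph (s t : ℕ) :
    SimpleGraph ((Fin (s + 1) × Fin t) ⊕ ((Fin s × Fin 2) ⊕ Fin 2)) :=
  SimpleGraph.fromRel (fun a b =>
    match a, b with
    | Sum.inl (i, j), Sum.inl (i', j') =>
        (i = i' ∧ (j : ℕ) + 1 = (j' : ℕ)) ∨
          ((i : ℕ) + 1 = (i' : ℕ) ∧ (j : ℕ) = t - 1 ∧ (j' : ℕ) = 0)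
    | Sum.inl (i, j), Sum.inr (Sum.inl (k, _)) =>
        ((i : ℕ) = (k : ℕ) ∧ (j : ℕ) = t - 1) ∨ ((i : ℕ) = (k : ℕ) + 1 ∧ (j : ℕ) = 0)
    | Sum.inl (i, j), Sum.inr (Sum.inr m) =>
        ((m : ℕ) = 0 ∧ (i : ℕ) = 0 ∧ (j : ℕ) = 0) ∨
          ((m : ℕ) = 1 ∧ (i : ℕ) = s ∧ (j : ℕ) = t - 1)
    | _, _ => False)

/-- `H̃ᵖ_{s,t}`: the union of `s+1` disjoint paths `Qᵢ` on `t` vertices and `s` disjoint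
copies `Rᵢ` of `T p` with ends `vᵢ = (i, end)`, together with the edges
`uᵢᵗ u_{i+1}¹`, `uᵢᵗ vᵢ`, `u_{i+1}¹ vᵢ` for `i ∈ [s]`. -/
def Htilde (s t p : ℕ) :
    SimpleGraph ((Fin (s + 1) × Fin t) ⊕ (Fin s × (Fin p ⊕ Fin 2))) :=
  SimpleGraph.fromRel (fun a b =>
    match a, b with
    | Sum.inl (i, j), Sum.inl (i', j') =>
        (i = i' ∧ (j : ℕ) + 1 = (j' : ℕ)) ∨
          ((i : ℕ) + 1 = (i' : ℕ) ∧ (j : ℕ) = t - 1 ∧ (j' : ℕ) = 0)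
    | Sum.inl (i, j), Sum.inr (k, x) =>
        isTEnd x ∧ (((i : ℕ) = (k : ℕ) ∧ (j : ℕ) = t - 1) ∨
          ((i : ℕ) = (k : ℕ) + 1 ∧ (j : ℕ) = 0))
    | Sum.inr (k, x), Sum.inr (k', y) => k = k' ∧ (Tgraph p).Adj x y
    | _, _ => False)

/-- A finite graph, encoded as a simple graph on some `Fin n`. -/
abbrev GraphFam := Set (Σ n : ℕ, SimpleGraph (Fin n))

/-- `Below 𝓗 G` means that some member of the family `𝓗` is (isomorphic to) an induced
subgraph of `G`; so `𝓗 ≤ 𝓗₂` iff `Below 𝓗 G` holds for every `G ∈ 𝓗₂`. -/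
def Below (𝓗 : GraphFam) {W : Type*} (G : SimpleGraph W) : Prop :=
  ∃ H ∈ 𝓗, Nonempty (H.2 ↪g G)

/-- The relation `𝓗₁ ≤ 𝓗₂` between families of graphs: every member of `𝓗₂` contains an
induced subgraph isomorphic to some member of `𝓗₁`. -/
def FamLE (𝓗₁ 𝓗₂ : GraphFam) : Prop :=
  ∀ H ∈ 𝓗₂, Below 𝓗₁ H.2

/-- The induced matching number `ν'(G)`. -/
noncomputable def indMatchNum {V : Type*} [Fintype V] (G : SimpleGraph V) : ℕ :=
  sSup {k : ℕ | ∃ M : G.Subgraph, M.IsInduced ∧ M.IsMatching ∧ M.verts.ncard = 2 * k}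

/-!
Fix a maximum matching, an exposed vertex `r`, and, among the maximum matchings exposing `r`,
one minimising the total distance from `r` to the exposed vertices. If the deficiency is large,
pigeonhole yields many exposed vertices `u` at a common distance `ℓ ≥ 2` from `r`. On a geodesic
from `u` to `r` the second vertex `c u` is matched, to `w u` say; the absence of augmenting paths
of length 1, 3 and 5 and the minimality of the distance sum make these forks almost independent.
Climbing the geodesics level by level, star-freeness lets us prune the family so that distinct
branches stay non-adjacent below the current level, and Ramsey's theorem at the current level
gives either a clique of size `n`, which with the branches below is an induced `K̃ₙᵖ`, or a large
independent set to continue with. At level `ℓ - 1` the survivors are independent neighbours of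
`r`, an induced `K_{1,n}`.
-/

open Finset

section Combinatorics

variable {α : Type*}

theorem exists_pairwise_or_pairwise_not_of_two_pow_le (R : α → α → Prop)
    (hR : ∀ x y, R x y → R y x) :
    ∀ (a b : ℕ) (s : Finset α), 2 ^ (a + b) ≤ #s →
      (∃ t ⊆ s, a ≤ #t ∧ (t : Set α).Pairwise R) ∨
        ∃ t ⊆ s, b ≤ #t ∧ (t : Set α).Pairwise fun x y => ¬ R x y := by
  classical
  intro a
  induction a with
  | zero => exact fun _ s _ => .inl ⟨∅, empty_subset s, by simp, by simp⟩
  | succ a iha =>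
    intro b
    induction b with
    | zero => exact fun s _ => .inr ⟨∅, empty_subset s, by simp, by simp⟩
    | succ b ihb =>
      intro s hs
      obtain ⟨v, hv⟩ : s.Nonempty := card_pos.mp (lt_of_lt_of_le (Nat.two_pow_pos _) hs)
      set A := {x ∈ s.erase v | R v x}
      set B := {x ∈ s.erase v | ¬ R v x}
      have hAB : #A + #B + 1 = #s := by
        rw [card_filter_add_card_filter_not, card_erase_add_one hv]
      have hA : A ⊆ s := (filter_subset _ _).trans (erase_subset _ _)
      have hB : B ⊆ s := (filter_subset _ _).trans (erase_subset _ _)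
      have hvA : v ∉ A := fun h => by simp [A] at h
      have hvB : v ∉ B := fun h => by simp [B] at h
      by_cases hAbig : 2 ^ (a + (b + 1)) ≤ #A
      · rcases iha (b + 1) A hAbig with ⟨t, htA, hat, ht⟩ | ⟨t, htA, hbt, ht⟩
        · refine .inl ⟨insert v t, insert_subset hv (htA.trans hA), ?_, ?_⟩
          · rw [card_insert_of_notMem fun h => hvA (htA h)]; omega
          · rw [coe_insert, Set.pairwise_insert]
            have hvx : ∀ x ∈ t, R v x := fun x hx => (mem_filter.mp (htA hx)).2
            exact ⟨ht, fun x hx _ => ⟨hvx x hx, hR _ _ (hvx x hx)⟩⟩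
        · exact .inr ⟨t, htA.trans hA, hbt, ht⟩
      · have hBbig : 2 ^ (a + 1 + b) ≤ #B := by
          rw [show a + 1 + (b + 1) = a + (b + 1) + 1 by omega, pow_succ] at hs
          rw [show a + 1 + b = a + (b + 1) by omega]
          omega
        rcases ihb B hBbig with ⟨t, htB, hat, ht⟩ | ⟨t, htB, hbt, ht⟩
        · exact .inl ⟨t, htB.trans hB, hat, ht⟩
        · refine .inr ⟨insert v t, insert_subset hv (htB.trans hB), ?_, ?_⟩
          · rw [card_insert_of_notMem fun h => hvB (htB h)]; omega
          · rw [coe_insert, Set.pairwise_insert]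
            have hvx : ∀ x ∈ t, ¬ R v x := fun x hx => (mem_filter.mp (htB hx)).2
            exact ⟨ht, fun x hx _ => ⟨hvx x hx, fun h => hvx x hx (hR _ _ h)⟩⟩

theorem exists_card_filter_le_of_forall_card_filter_le (R : α → α → Prop) [DecidableRel R]
    {D : ℕ} {s : Finset α} (hs : s.Nonempty) (hR : ∀ v ∈ s, #{x ∈ s | R v x} ≤ D) :
    ∃ v ∈ s, #{x ∈ s | R x v} ≤ D := by
  refine exists_le_of_sum_le hs ?_
  calc ∑ v ∈ s, #{x ∈ s | R x v} = ∑ x ∈ s, #{v ∈ s | R x v} := by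
        simp only [card_filter]; exact sum_comm
    _ ≤ ∑ _v ∈ s, D := sum_le_sum hR

theorem exists_pairwise_not_of_card_filter_le (R : α → α → Prop) [DecidableRel R] (D : ℕ)
    (s : Finset α) (hR : ∀ v ∈ s, #{x ∈ s | R v x} ≤ D) :
    ∃ t ⊆ s, #s ≤ (2 * D + 1) * #t ∧ (t : Set α).Pairwise fun x y => ¬ R x y := by
  classical
  induction s using Finset.strongInduction with
  | H s ih =>
  rcases s.eq_empty_or_nonempty with rfl | hs
  · exact ⟨∅, empty_subset _, by simp, by simp⟩
  obtain ⟨v, hv, hvin⟩ := exists_card_filter_le_of_forall_card_filter_le R hs hR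
  set B := {x ∈ s | x = v ∨ R v x ∨ R x v}
  have hBcard : #B ≤ 2 * D + 1 := by
    have : B ⊆ insert v ({x ∈ s | R v x} ∪ {x ∈ s | R x v}) := by
      intro x hx
      simp only [B, mem_filter] at hx
      simp only [mem_insert, mem_union, mem_filter]
      tauto
    calc #B ≤ #{x ∈ s | R v x} + #{x ∈ s | R x v} + 1 :=
          (card_le_card this).trans <| (card_insert_le _ _).trans <|
            Nat.add_le_add_right (card_union_le _ _) 1
      _ ≤ 2 * D + 1 := by have := hR v hv; omega
  have hvB : v ∈ B := mem_filter.mpr ⟨hv, .inl rfl⟩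
  obtain ⟨t, hts, hcard, ht⟩ := ih (s \ B) (sdiff_ssubset (filter_subset _ _) ⟨v, hvB⟩)
    fun x hx => (card_le_card (filter_subset_filter _ sdiff_subset)).trans
      (hR x (mem_sdiff.mp hx).1)
  have hfar : ∀ x ∈ t, x ≠ v ∧ ¬ R v x ∧ ¬ R x v := by
    intro x hx
    have := mem_sdiff.mp (hts hx)
    simpa [B, this.1, not_or] using this.2
  refine ⟨insert v t, insert_subset hv (hts.trans sdiff_subset), ?_, ?_⟩
  · rw [card_insert_of_notMem fun h => (hfar v h).1 rfl]
    nlinarith [card_le_card_sdiff_add_card (s := s) (t := B)]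
  · rw [coe_insert, Set.pairwise_insert]
    exact ⟨ht, fun x hx _ => ⟨(hfar x hx).2.1, (hfar x hx).2.2⟩⟩

end Combinatorics

section Matchings

variable {V : Type*} [Fintype V] [DecidableEq V] {G : SimpleGraph V} {f : V → V}

/-- A matching encoded by the involution sending each vertex to its partner; exposed vertices are
the fixed points. -/
structure IsMatchingInv (G : SimpleGraph V) (f : V → V) : Prop where
  involutive : Function.Involutive f
  adj : ∀ v, f v ≠ v → G.Adj v (f v)

def exposed (f : V → V) : Finset V := {v | f v = v}

@[simp]
theorem mem_exposed {v : V} : v ∈ exposed f ↔ f v = v := by simp [exposed]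

theorem IsMatchingInv.deficiency_le (hf : IsMatchingInv G f) : deficiency G ≤ #(exposed f) := by
  let M : G.Subgraph :=
    { verts := {v | f v ≠ v}
      Adj := fun a b => a ≠ b ∧ f a = b
      adj_sub := by rintro a b ⟨hab, rfl⟩; exact hf.adj a (Ne.symm hab)
      edge_vert := by rintro a b ⟨hab, rfl⟩; exact Ne.symm hab
      symm := ⟨fun a b ⟨hab, hfab⟩ => ⟨Ne.symm hab, by rw [← hfab, hf.involutive]⟩⟩ }
  have hM : M.IsMatching := fun v hv => ⟨f v, ⟨Ne.symm hv, rfl⟩, fun _ h => h.2.symm⟩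
  have hcard : M.verts.ncard + #(exposed f) = Fintype.card V := by
    have : M.verts = ((exposed f)ᶜ : Finset V) := by ext; simp [M]
    rw [this, Set.ncard_coe_finset, card_compl_add_card]
  have hle : M.verts.ncard ≤ sSup {k | ∃ M : G.Subgraph, M.IsMatching ∧ M.verts.ncard = k} :=
    le_csSup ⟨Fintype.card V, by rintro _ ⟨M', -, rfl⟩; exact
      (Set.ncard_le_ncard (Set.subset_univ _)).trans (by simp [Set.ncard_univ])⟩ ⟨M, hM, rfl⟩
  unfold deficiency
  omega

theorem IsMatchingInv.exchange (hf : IsMatchingInv G f) {a b : V} (ha : f a = a) (hb : f b ≠ b)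
    (hab : G.Adj a b) :
    ∃ g, IsMatchingInv G g ∧ exposed g = insert (f b) ((exposed f).erase a) ∧
      ∀ v, v ≠ a → v ≠ b → v ≠ f b → g v = f v := by
  have hinv := hf.involutive
  let g := fun v => if v = a then b else if v = b then a else if v = f b then f b else f v
  refine ⟨g, ⟨fun v => ?_, fun v hv => ?_⟩, ?_, fun v h1 h2 h3 => by simp [g, h1, h2, h3]⟩
  · simp only [g]; split_ifs <;> grind [Function.Involutive]
  · simp only [g] at hv ⊢; split_ifs at hv ⊢ <;> grind [hf.adj, hab.symm]
  · ext v
    simp only [mem_exposed, mem_insert, mem_erase, g]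
    split_ifs <;> grind [Function.Involutive]

theorem IsMatchingInv.augment (hf : IsMatchingInv G f) {a b : V} (ha : f a = a) (hb : f b = b)
    (hab : G.Adj a b) : ∃ g, IsMatchingInv G g ∧ #(exposed g) + 2 = #(exposed f) := by
  have hinv := hf.involutive
  let g := fun v => if v = a then b else if v = b then a else f v
  have hE : exposed g = ((exposed f).erase a).erase b := by
    ext v; simp only [mem_exposed, mem_erase, g]; split_ifs <;> grind [G.ne_of_adj]
  refine ⟨g, ⟨fun v => ?_, fun v hv => ?_⟩, ?_⟩
  · simp only [g]; split_ifs <;> grind [Function.Involutive]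
  · simp only [g] at hv ⊢; split_ifs at hv ⊢ <;> grind [hf.adj, hab.symm]
  · rw [hE, card_erase_of_mem (by simpa using ⟨hab.ne.symm, hb⟩), card_erase_of_mem (by simpa)]
    have : 1 < #(exposed f) := one_lt_card.mpr ⟨a, by simpa, b, by simpa, hab.ne⟩
    omega

end Matchings

section MaxMatchings

variable {V : Type*} [Fintype V] [DecidableEq V] {G : SimpleGraph V} {f : V → V} {r : V}

structure IsMaxMatchingInv (G : SimpleGraph V) (f : V → V) : Prop extends IsMatchingInv G f where
  card_exposed_le : ∀ g, IsMatchingInv G g → #(exposed f) ≤ #(exposed g)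

structure IsOptimalMatchingInv (G : SimpleGraph V) (r : V) (f : V → V) : Prop
    extends IsMaxMatchingInv G f where
  root : f r = r
  distSum_le : ∀ g, IsMaxMatchingInv G g → g r = r →
    ∑ v ∈ exposed f, G.dist r v ≤ ∑ v ∈ exposed g, G.dist r v

namespace IsMaxMatchingInv

theorem of_card_eq (hf : IsMaxMatchingInv G f) {g : V → V} (hg : IsMatchingInv G g)
    (h : #(exposed g) = #(exposed f)) : IsMaxMatchingInv G g :=
  ⟨hg, fun g' hg' => h ▸ hf.card_exposed_le g' hg'⟩

theorem exchange (hf : IsMaxMatchingInv G f) {a b : V} (ha : f a = a) (hb : f b ≠ b)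
    (hab : G.Adj a b) :
    ∃ g, IsMaxMatchingInv G g ∧ exposed g = insert (f b) ((exposed f).erase a) ∧
      ∀ v, v ≠ a → v ≠ b → v ≠ f b → g v = f v := by
  obtain ⟨g, hg, hE, hgf⟩ := hf.toIsMatchingInv.exchange ha hb hab
  refine ⟨g, hf.of_card_eq hg ?_, hE, hgf⟩
  rw [hE, card_insert_of_notMem, card_erase_add_one (by simpa)]
  simp [hf.involutive b, Ne.symm hb]

theorem not_adj (hf : IsMaxMatchingInv G f) {a b : V} (ha : f a = a) (hb : f b = b) :
    ¬ G.Adj a b := fun hab => by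
  obtain ⟨g, hg, hcard⟩ := hf.toIsMatchingInv.augment ha hb hab
  have := hf.card_exposed_le g hg
  omega

/-- No augmenting path `u, f c, c, u'`. -/
theorem not_adj_partner (hf : IsMaxMatchingInv G f) {u u' c : V} (hu : f u = u) (hu' : f u' = u')
    (huu' : u ≠ u') (hc : f c ≠ c) (hcu' : G.Adj c u') : ¬ G.Adj u (f c) := fun h => by
  obtain ⟨g, hg, hE, -⟩ := hf.exchange hu (by rwa [hf.involutive c, ne_comm]) h
  rw [hf.involutive c] at hE
  refine hg.not_adj (mem_exposed.mp ?_) (mem_exposed.mp ?_) hcu' <;> rw [hE]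
  · exact mem_insert_self _ _
  · exact mem_insert_of_mem (mem_erase.mpr ⟨Ne.symm huu', mem_exposed.mpr hu'⟩)

/-- No augmenting path `u, c, f c, f c', c', u'`. -/
theorem not_adj_partner_partner (hf : IsMaxMatchingInv G f) {u u' c c' : V} (hu : f u = u)
    (hu' : f u' = u') (huu' : u ≠ u') (hc : f c ≠ c) (hc' : f c' ≠ c') (hcc' : c ≠ c')
    (hcw' : c ≠ f c') (huc : G.Adj u c) (hcu' : G.Adj c' u') : ¬ G.Adj (f c) (f c') := fun h => by
  have hinv := hf.involutive
  obtain ⟨g₁, hg₁, hE₁, hg₁f⟩ := hf.exchange hu hc huc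
  have hw' : g₁ (f c') = c' := by
    rw [hg₁f _ (by grind [hinv c']) (Ne.symm hcw') fun h => hcc' (hinv.injective h).symm]
    exact hinv c'
  obtain ⟨g₂, hg₂, hE₂, -⟩ := hg₁.exchange (a := f c) (b := f c')
    (mem_exposed.mp (by rw [hE₁]; exact mem_insert_self _ _)) (by rw [hw']; exact Ne.symm hc') h
  rw [hw'] at hE₂
  refine hg₂.not_adj (mem_exposed.mp ?_) (mem_exposed.mp ?_) hcu' <;> rw [hE₂]
  · exact mem_insert_self _ _
  · rw [hE₁]
    simp only [mem_insert, mem_erase, mem_exposed]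
    grind [hinv c]

end IsMaxMatchingInv

theorem IsOptimalMatchingInv.dist_le_dist_partner (hf : IsOptimalMatchingInv G r f) {u a : V}
    (hu : f u = u) (hur : u ≠ r) (hua : G.Adj u a) (ha : f a ≠ a) :
    G.dist r u ≤ G.dist r (f a) := by
  obtain ⟨g, hg, hE, -⟩ := hf.exchange hu ha hua
  have hgr : g r = r := mem_exposed.mp <| by
    rw [hE]; exact mem_insert_of_mem (mem_erase.mpr ⟨Ne.symm hur, mem_exposed.mpr hf.root⟩)
  have hle := hf.distSum_le g hg hgr
  rw [hE, sum_insert (by simp [hf.involutive a, Ne.symm ha]),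
    ← add_sum_erase _ _ (mem_exposed.mpr hu)] at hle
  omega

/-- Rematching `u` to `f c` would expose `c`, which is closer to `r`. -/
theorem IsOptimalMatchingInv.not_adj_partner_of_dist_lt (hf : IsOptimalMatchingInv G r f)
    {u c : V} (hu : f u = u) (hur : u ≠ r) (hc : f c ≠ c) (hlt : G.dist r c < G.dist r u) :
    ¬ G.Adj u (f c) := fun h => by
  have := hf.dist_le_dist_partner hu hur h (by rw [hf.involutive]; exact hc.symm)
  rw [hf.involutive] at this
  omega

theorem exists_isOptimalMatchingInv_of_lt_deficiency {k : ℕ} (h : k < deficiency G) :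
    ∃ r f, IsOptimalMatchingInv G r f ∧ k < #(exposed f) := by
  classical
  obtain ⟨f₀, hf₀, hmin₀⟩ := exists_min_image {g : V → V | IsMatchingInv G g}
    (fun g => #(exposed g)) ⟨id, by simpa using ⟨fun _ => rfl, fun _ h => absurd rfl h⟩⟩
  have hmax₀ : IsMaxMatchingInv G f₀ :=
    ⟨(mem_filter.mp hf₀).2, fun g hg => hmin₀ g (by simpa using hg)⟩
  have hk := h.trans_le hmax₀.deficiency_le
  obtain ⟨r, hr⟩ : (exposed f₀).Nonempty := card_pos.mp (by omega)
  obtain ⟨f, hf, hfmin⟩ := exists_min_image {g : V → V | IsMaxMatchingInv G g ∧ g r = r}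
    (fun g => ∑ v ∈ exposed g, G.dist r v) ⟨f₀, by simpa using ⟨hmax₀, mem_exposed.mp hr⟩⟩
  simp only [mem_filter, mem_univ, true_and] at hf
  refine ⟨r, f, ⟨hf.1, hf.2, fun g hg hgr => hfmin g (by simpa using ⟨hg, hgr⟩)⟩, ?_⟩
  have := hf.1.card_exposed_le f₀ hmax₀.toIsMatchingInv
  have := hmax₀.card_exposed_le f hf.1.toIsMatchingInv
  omega

end MaxMatchings

section GraphTools

variable {V : Type*} {G : SimpleGraph V}

theorem card_lt_of_forall_adj {α : Type*} {n : ℕ} (hstar : ¬ Nonempty (_root_.starGraph n ↪g G))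
    {v : V} {s : Finset α} {g : α → V} (hg : Set.InjOn g s)
    (hind : ∀ x ∈ s, ∀ x' ∈ s, x ≠ x' → ¬ G.Adj (g x) (g x')) (hv : ∀ x ∈ s, G.Adj v (g x)) :
    #s < n := by
  by_contra! hn
  obtain ⟨e, he⟩ := Function.Embedding.exists_of_card_le_finset (α := Fin n) (by simpa using hn)
  have hes : ∀ i, e i ∈ s := fun i => he ⟨i, rfl⟩
  have hge : ∀ {i j}, g (e i) = g (e j) → i = j := fun h => e.injective (hg (hes _) (hes _) h)
  refine hstar ⟨⟨⟨Sum.elim (fun _ => v) (g ∘ e), ?_⟩, ?_⟩⟩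
  · rintro (_ | i) (_ | j) h <;> simp only [Sum.elim_inl, Sum.elim_inr, Function.comp] at h
    · rfl
    · exact absurd h (hv _ (hes j)).ne
    · exact absurd h.symm (hv _ (hes i)).ne
    · rw [hge h]
  · rintro (_ | i) (_ | j)
    · simp [_root_.starGraph]
    · exact iff_of_true (hv _ (hes j)) (by simp [_root_.starGraph])
    · exact iff_of_true (hv _ (hes i)).symm (by simp [_root_.starGraph])
    · exact iff_of_false (fun (h : G.Adj (g (e i)) (g (e j))) =>
        hind _ (hes i) _ (hes j) (fun hij => h.ne (congrArg g hij)) h) (by simp [_root_.starGraph])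

theorem dist_le_dist_add_one_of_adj {r x y : V} (h : G.Adj x y) :
    G.dist r x ≤ G.dist r y + 1 := by
  have := h.symm.diff_dist_adj (u := r)
  omega

theorem not_adj_of_dist_add_two_le {r x y : V} (h : G.dist r x + 2 ≤ G.dist r y) :
    ¬ G.Adj x y := fun hxy => by
  have := dist_le_dist_add_one_of_adj (r := r) hxy.symm
  omega

theorem SimpleGraph.Reachable.exists_geodesic {r u : V} (h : G.Reachable r u) :
    ∃ y : ℕ → V, y 0 = u ∧ (∀ a ≤ G.dist r u, G.dist r (y a) = G.dist r u - a) ∧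
      ∀ a < G.dist r u, G.Adj (y a) (y (a + 1)) := by
  obtain ⟨p, hp⟩ := h.symm.exists_walk_length_eq_dist
  rw [dist_comm] at hp
  refine ⟨p.getVert, p.getVert_zero, fun a ha => ?_, fun a ha => p.adj_getVert_succ (by omega)⟩
  have hfront : G.dist u (p.getVert a) ≤ a := (dist_le (p.take a)).trans (by simp)
  have hback : G.dist r (p.getVert a) ≤ p.length - a := by
    rw [dist_comm, ← p.drop_length a]; exact dist_le _
  have := (p.take a).reachable.dist_triangle_left r
  rw [dist_comm (u := u) (v := r), dist_comm (u := p.getVert a) (v := r)] at this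
  omega

theorem card_filter_adj_le_mul_self [DecidableEq V] [DecidableRel G.Adj] {n : ℕ}
    (hstar : ¬ Nonempty (_root_.starGraph n ↪g G))
    {U : Finset V} {c w : V → V} (hU : ∀ x ∈ U, ∀ x' ∈ U, x ≠ x' → ¬ G.Adj x x')
    (hc : ∀ x ∈ U, G.Adj x (c x)) (hcw : ∀ x ∈ U, ∀ x' ∈ U, w x = w x' → c x = c x')
    (hw : ∀ x ∈ U, ∀ x' ∈ U, w x ≠ w x' → ¬ G.Adj (w x) (w x')) (z : V) :
    #{x ∈ U | G.Adj z (w x)} ≤ n * n := by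
  set F := {x ∈ U | G.Adj z (w x)}
  have hFU : ∀ {x}, x ∈ F → x ∈ U := fun hx => (mem_filter.mp hx).1
  calc #F ≤ n * #(F.image w) := card_le_mul_card_image _ _ fun b hb => by
        obtain ⟨x₀, hx₀, rfl⟩ := mem_image.mp hb
        refine (card_lt_of_forall_adj hstar (v := c x₀) (g := id) (Set.injOn_id _)
          (fun x hx x' hx' => hU x (hFU (mem_filter.mp hx).1) x' (hFU (mem_filter.mp hx').1))
          fun x hx => ?_).le
        obtain ⟨hxF, hwx⟩ := mem_filter.mp hx
        rw [← hcw x (hFU hxF) x₀ (hFU hx₀) hwx]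
        exact (hc x (hFU hxF)).symm
    _ ≤ n * n := Nat.mul_le_mul_left _ <| le_of_lt <| card_lt_of_forall_adj hstar (v := z)
        (g := id) (Set.injOn_id _) (by
          simp only [mem_image]
          rintro _ ⟨x, hx, rfl⟩ _ ⟨x', hx', rfl⟩ hne
          exact hw x (hFU hx) x' (hFU hx') hne) (by
          simp only [mem_image]
          rintro _ ⟨x, hx, rfl⟩
          exact (mem_filter.mp hx).2)

theorem exists_le_card_filter_dist_eq [DecidableEq V] (hconn : G.Connected) {N K : ℕ} (hN : 1 ≤ N)
    (hdiam : ∀ x y : V, G.dist x y ≤ N) (r : V) {s : Finset V} (hcard : N * K < #s) :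
    ∃ ℓ, 1 ≤ ℓ ∧ ℓ ≤ N ∧ K ≤ #{u ∈ s | G.dist r u = ℓ} := by
  have hlevel : ∀ u ∈ s.erase r, G.dist r u ∈ Icc 1 N := fun u hu => mem_Icc.mpr
    ⟨(hconn.pos_dist_of_ne (mem_erase.mp hu).1.symm), hdiam r u⟩
  obtain ⟨ℓ, hℓ, hK⟩ := exists_le_card_fiber_of_mul_le_card_of_maps_to hlevel
    ⟨1, mem_Icc.mpr ⟨le_rfl, hN⟩⟩ (n := K) (by
      have := pred_card_le_card_erase (s := s) (a := r)
      rw [Nat.card_Icc, Nat.add_sub_cancel]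
      omega)
  exact ⟨ℓ, (mem_Icc.mp hℓ).1, (mem_Icc.mp hℓ).2,
    hK.trans (card_le_card (filter_subset_filter _ (erase_subset _ _)))⟩

end GraphTools

section Ktilde

variable {V : Type*} {G : SimpleGraph V} {n p : ℕ}

/-- The end of `T p` has level `p`, the branch vertex level `1`, the two leaves level `0`. -/
def Tgraph.level (p : ℕ) : Fin p ⊕ Fin 2 → ℕ := Sum.elim (fun a => p - a) fun _ => 0

theorem Tgraph.level_le {x : Fin p ⊕ Fin 2} : Tgraph.level p x ≤ p := by
  rcases x with a | k <;> simp [Tgraph.level]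

theorem Tgraph.eq_of_level_eq {x x' : Fin p ⊕ Fin 2} (hx : x ≠ .inr 1) (hx' : x' ≠ .inr 1)
    (h : Tgraph.level p x = Tgraph.level p x') : x = x' := by
  rcases x with ⟨a, ha⟩ | k <;> rcases x' with ⟨b, hb⟩ | k' <;>
    simp only [Tgraph.level, Sum.elim_inl, Sum.elim_inr] at h <;> first
    | (simp only [Sum.inl.injEq, Fin.mk.injEq]; omega)
    | omega
    | (fin_cases k <;> fin_cases k' <;> simp_all)

theorem Tgraph_adj_iff {x x' : Fin p ⊕ Fin 2} : (Tgraph p).Adj x x' ↔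
    Tgraph.level p x + 1 = Tgraph.level p x' ∨ Tgraph.level p x' + 1 = Tgraph.level p x := by
  rcases x with ⟨a, ha⟩ | k <;> rcases x' with ⟨b, hb⟩ | k' <;>
    simp [Tgraph, Tgraph.level, fromRel_adj] <;> omega

theorem isTEnd_iff (hp : 1 ≤ p) {x : Fin p ⊕ Fin 2} : isTEnd x ↔ Tgraph.level p x = p := by
  rcases x with ⟨a, ha⟩ | k <;> simp [isTEnd, Tgraph.level] <;> omega

theorem Ktilde_adj_iff (hp : 1 ≤ p) {i j : Fin n} {x x' : Fin p ⊕ Fin 2} :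
    (Ktilde n p).Adj (i, x) (j, x') ↔
      (i = j ∧ (Tgraph.level p x + 1 = Tgraph.level p x' ∨
        Tgraph.level p x' + 1 = Tgraph.level p x)) ∨
      (i ≠ j ∧ Tgraph.level p x = p ∧ Tgraph.level p x' = p) := by
  simp only [Ktilde, fromRel_adj, ← Tgraph_adj_iff, isTEnd_iff hp, (Tgraph p).adj_comm x' x]
  have := (Tgraph p).ne_of_adj (a := x) (b := x')
  grind

theorem nonempty_Ktilde_embedding (hp : 1 ≤ p) (φ : Fin n × (Fin p ⊕ Fin 2) → V)
    (hφ : φ.Injective)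
    (hsame : ∀ i x x', G.Adj (φ (i, x)) (φ (i, x')) ↔
      Tgraph.level p x + 1 = Tgraph.level p x' ∨ Tgraph.level p x' + 1 = Tgraph.level p x)
    (hcross : ∀ i j, i ≠ j → ∀ x x', G.Adj (φ (i, x)) (φ (j, x')) ↔
      Tgraph.level p x = p ∧ Tgraph.level p x' = p) :
    Nonempty (Ktilde n p ↪g G) := by
  refine ⟨⟨⟨φ, hφ⟩, fun {a b} => ?_⟩⟩
  obtain ⟨i, x⟩ := a
  obtain ⟨j, x'⟩ := b
  change G.Adj (φ (i, x)) (φ (j, x')) ↔ _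
  rw [Ktilde_adj_iff hp]
  by_cases hij : i = j
  · subst hij; simp [hsame]
  · simp [hcross i j hij, hij]

end Ktilde

section Geodesics

variable {V : Type*} {G : SimpleGraph V} {r u : V} {ℓ n p s : ℕ} {y : V → ℕ → V} {w : V → V}
  {I J : Finset V}

/-- `y u` is a geodesic from `u` to `r`, and `w u` (the matching partner of `y u 1` in the
application) hangs from `y u 1`. -/
structure Forks (G : SimpleGraph V) (r : V) (ℓ : ℕ) (y : V → ℕ → V) (w : V → V)
    (U : Finset V) : Prop where
  path_zero : ∀ u ∈ U, y u 0 = u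
  dist_path : ∀ u ∈ U, ∀ a ≤ ℓ, G.dist r (y u a) = ℓ - a
  adj_path : ∀ u ∈ U, ∀ a < ℓ, G.Adj (y u a) (y u (a + 1))
  adj_fork : ∀ u ∈ U, G.Adj (y u 1) (w u)
  le_dist_fork : ∀ u ∈ U, ℓ ≤ G.dist r (w u)
  not_adj_fork : ∀ u ∈ U, ¬ G.Adj u (w u)
  ne_fork : ∀ u ∈ U, ∀ u' ∈ U, u ≠ w u'
  root_not_adj_root : ∀ u ∈ U, ∀ u' ∈ U, u ≠ u' → ¬ G.Adj u u'
  root_not_adj_fork : ∀ u ∈ U, ∀ u' ∈ U, u ≠ u' → ¬ G.Adj u (w u')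
  fork_not_adj_fork : ∀ u ∈ U, ∀ u' ∈ U, w u ≠ w u' → ¬ G.Adj (w u) (w u')
  path_one_eq_of_fork_eq : ∀ u ∈ U, ∀ u' ∈ U, w u = w u' → y u 1 = y u' 1

structure Branches (G : SimpleGraph V) (r : V) (ℓ : ℕ) (y : V → ℕ → V) (w : V → V)
    (I : Finset V) : Prop extends Forks G r ℓ y w I where
  injOn_fork : Set.InjOn w I
  fork_not_adj_path_one : ∀ u ∈ I, ∀ u' ∈ I, u ≠ u' → ¬ G.Adj (w u) (y u' 1)

def NoCrossEdges (G : SimpleGraph V) (y : V → ℕ → V) (I : Finset V) (s : ℕ) : Prop :=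
  ∀ u ∈ I, ∀ u' ∈ I, u ≠ u' → ∀ a ≤ s, ∀ b ≤ s, ¬ G.Adj (y u a) (y u' b)

/-- The copy of `T p` at the branch `u`: its path is `y u p, …, y u 1`, its leaves `u` and `w u`. -/
def forkVertex (y : V → ℕ → V) (w : V → V) (p : ℕ) (u : V) : Fin p ⊕ Fin 2 → V :=
  Sum.elim (fun a => y u (p - a)) ![u, w u]

theorem forkVertex_of_ne (hu : y u 0 = u) {x : Fin p ⊕ Fin 2} (hx : x ≠ .inr 1) :
    forkVertex y w p u x = y u (Tgraph.level p x) := by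
  rcases x with a | k
  · rfl
  · fin_cases k
    · simpa [forkVertex, Tgraph.level] using hu.symm
    · exact absurd rfl hx

@[simp]
theorem forkVertex_inr_one : forkVertex y w p u (.inr 1) = w u := rfl

theorem Forks.mono (hF : Forks G r ℓ y w I) (hJ : J ⊆ I) : Forks G r ℓ y w J where
  path_zero u hu := hF.path_zero u (hJ hu)
  dist_path u hu := hF.dist_path u (hJ hu)
  adj_path u hu := hF.adj_path u (hJ hu)
  adj_fork u hu := hF.adj_fork u (hJ hu)
  le_dist_fork u hu := hF.le_dist_fork u (hJ hu)
  not_adj_fork u hu := hF.not_adj_fork u (hJ hu)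
  ne_fork u hu u' hu' := hF.ne_fork u (hJ hu) u' (hJ hu')
  root_not_adj_root u hu u' hu' := hF.root_not_adj_root u (hJ hu) u' (hJ hu')
  root_not_adj_fork u hu u' hu' := hF.root_not_adj_fork u (hJ hu) u' (hJ hu')
  fork_not_adj_fork u hu u' hu' := hF.fork_not_adj_fork u (hJ hu) u' (hJ hu')
  path_one_eq_of_fork_eq u hu u' hu' := hF.path_one_eq_of_fork_eq u (hJ hu) u' (hJ hu')

theorem Forks.noCrossEdges_zero (hF : Forks G r ℓ y w I) : NoCrossEdges G y I 0 := by
  intro u hu u' hu' hne a ha b hb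
  obtain ⟨rfl, rfl⟩ : a = 0 ∧ b = 0 := by omega
  rw [hF.path_zero u hu, hF.path_zero u' hu']
  exact hF.root_not_adj_root u hu u' hu' hne

theorem Forks.exists_branches {U : Finset V} (hF : Forks G r ℓ y w U) (hℓ : 0 < ℓ)
    (hstar : ¬ Nonempty (_root_.starGraph n ↪g G)) :
    ∃ I ⊆ U, #U ≤ (2 * (n * n) + 1) * #I ∧ Branches G r ℓ y w I := by
  classical
  obtain ⟨I, hIU, hcard, hI⟩ := exists_pairwise_not_of_card_filter_le
    (fun v x => G.Adj (y v 1) (w x)) (n * n) U fun v _ =>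
      card_filter_adj_le_mul_self hstar hF.root_not_adj_root
        (fun x hx => by simpa [hF.path_zero x hx] using hF.adj_path x hx 0 hℓ)
        hF.path_one_eq_of_fork_eq hF.fork_not_adj_fork (y v 1)
  refine ⟨I, hIU, hcard, hF.mono hIU, fun u hu u' hu' h => ?_,
    fun u hu u' hu' hne h => hI hu' hu (Ne.symm hne) h.symm⟩
  by_contra hne
  exact hI hu hu' hne (h ▸ hF.adj_fork u (hIU hu))

namespace Branches

theorem mono (hB : Branches G r ℓ y w I) (hJ : J ⊆ I) : Branches G r ℓ y w J where
  toForks := hB.toForks.mono hJ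
  injOn_fork := hB.injOn_fork.mono (by simpa using hJ)
  fork_not_adj_path_one u hu u' hu' := hB.fork_not_adj_path_one u (hJ hu) u' (hJ hu')

theorem fork_not_adj_path (hB : Branches G r ℓ y w I) {u' : V} (hu : u ∈ I) (hu' : u' ∈ I)
    (hne : u ≠ u') {a : ℕ} (ha : a ≤ ℓ) : ¬ G.Adj (w u) (y u' a) := by
  rcases (show a = 0 ∨ a = 1 ∨ 2 ≤ a by omega) with rfl | rfl | ha₂
  · rw [hB.path_zero u' hu', G.adj_comm]
    exact hB.root_not_adj_fork u' hu' u hu (Ne.symm hne)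
  · exact hB.fork_not_adj_path_one u hu u' hu' hne
  · refine fun h => not_adj_of_dist_add_two_le (r := r) ?_ h.symm
    rw [hB.dist_path u' hu' a ha]
    have := hB.le_dist_fork u hu
    omega

theorem adj_path_iff (hB : Branches G r ℓ y w I) (hu : u ∈ I) {a b : ℕ} (ha : a ≤ ℓ)
    (hb : b ≤ ℓ) : G.Adj (y u a) (y u b) ↔ a + 1 = b ∨ b + 1 = a := by
  refine ⟨fun h => ?_, ?_⟩
  · have h₁ := dist_le_dist_add_one_of_adj (r := r) h
    have h₂ := dist_le_dist_add_one_of_adj (r := r) h.symm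
    rw [hB.dist_path u hu a ha, hB.dist_path u hu b hb] at h₁ h₂
    have : a ≠ b := by rintro rfl; exact G.irrefl h
    omega
  · rintro (rfl | rfl)
    · exact hB.adj_path u hu a (by omega)
    · exact (hB.adj_path u hu b (by omega)).symm

theorem fork_adj_path_iff (hB : Branches G r ℓ y w I) (hu : u ∈ I) {b : ℕ} (hb : b ≤ ℓ) :
    G.Adj (w u) (y u b) ↔ b = 1 := by
  refine ⟨fun h => ?_, fun hb => hb ▸ (hB.adj_fork u hu).symm⟩
  have := dist_le_dist_add_one_of_adj (r := r) h
  rw [hB.dist_path u hu b hb] at this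
  have := hB.le_dist_fork u hu
  rcases (show b = 0 ∨ b = 1 by omega) with rfl | rfl
  · rw [hB.path_zero u hu] at h; exact absurd h.symm (hB.not_adj_fork u hu)
  · rfl

theorem injOn_of_noCrossEdges (hB : Branches G r ℓ y w I) (hs : s ≤ ℓ)
    (h : NoCrossEdges G y I s) : Set.InjOn (y · s) I := by
  intro u hu u' hu' heq
  cases s with
  | zero => simpa [hB.path_zero u hu, hB.path_zero u' hu'] using heq
  | succ s =>
    by_contra hne
    refine h u hu u' hu' hne (s + 1) le_rfl s (by omega) ?_
    simp only at heq
    rw [heq]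
    exact (hB.adj_path u' hu' s (by omega)).symm

theorem exists_prune (hB : Branches G r ℓ y w I) (hstar : ¬ Nonempty (_root_.starGraph n ↪g G))
    (hs : s + 1 < ℓ) (h : NoCrossEdges G y I s) :
    ∃ J ⊆ I, #I ≤ (2 * n + 1) * #J ∧ ∀ u ∈ J, ∀ u' ∈ J, u ≠ u' →
      ∀ a ≤ s + 1, ∀ b ≤ s + 1, G.Adj (y u a) (y u' b) → a = s + 1 ∧ b = s + 1 := by
  classical
  obtain ⟨J, hJI, hcard, hJ⟩ := exists_pairwise_not_of_card_filter_le
    (fun v x => G.Adj (y v (s + 1)) (y x s)) n I fun v hv =>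
      (card_lt_of_forall_adj hstar ((hB.injOn_of_noCrossEdges (by omega) h).mono
        (coe_subset.mpr (filter_subset _ _))) (fun x hx x' hx' hne => h x (mem_filter.mp hx).1 x'
          (mem_filter.mp hx').1 hne s le_rfl s le_rfl) fun x hx => (mem_filter.mp hx).2).le
  have htop : ∀ u ∈ J, ∀ u' ∈ J, u ≠ u' → ∀ b ≤ s, ¬ G.Adj (y u (s + 1)) (y u' b) := by
    intro u hu u' hu' hne b hb hadj
    rcases (show b = s ∨ b + 2 ≤ s + 1 by omega) with rfl | hb₂
    · exact hJ hu hu' hne hadj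
    · refine not_adj_of_dist_add_two_le (r := r) ?_ hadj
      rw [hB.dist_path u (hJI hu) _ hs.le, hB.dist_path u' (hJI hu') b (by omega)]
      omega
  refine ⟨J, hJI, hcard, fun u hu u' hu' hne a ha b hb hadj => ?_⟩
  by_contra hab
  rcases (show (a ≤ s ∧ b ≤ s) ∨ a = s + 1 ∨ b = s + 1 by omega) with ⟨ha', hb'⟩ | rfl | rfl
  · exact h u (hJI hu) u' (hJI hu') hne a ha' b hb' hadj
  · exact htop u hu u' hu' hne b (by omega) hadj
  · exact htop u' hu' u hu (Ne.symm hne) a (by omega) hadj.symm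

theorem forkVertex_adj_iff (hB : Branches G r ℓ y w I) (hu : u ∈ I) (hpℓ : p < ℓ)
    {x x' : Fin p ⊕ Fin 2} :
    G.Adj (forkVertex y w p u x) (forkVertex y w p u x') ↔
      Tgraph.level p x + 1 = Tgraph.level p x' ∨ Tgraph.level p x' + 1 = Tgraph.level p x := by
  have hx₀ := hB.path_zero u hu
  have hle : ∀ x : Fin p ⊕ Fin 2, Tgraph.level p x ≤ ℓ := fun x => Tgraph.level_le.trans hpℓ.le
  by_cases hx : x = .inr 1 <;> by_cases hx' : x' = .inr 1
  · subst hx hx'; simp [Tgraph.level]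
  · subst hx
    rw [forkVertex_inr_one, forkVertex_of_ne hx₀ hx', hB.fork_adj_path_iff hu (hle x')]
    simp only [Tgraph.level, Sum.elim_inr]
    omega
  · subst hx'
    rw [forkVertex_inr_one, forkVertex_of_ne hx₀ hx, G.adj_comm, hB.fork_adj_path_iff hu (hle x)]
    simp only [Tgraph.level, Sum.elim_inr]
    omega
  · rw [forkVertex_of_ne hx₀ hx, forkVertex_of_ne hx₀ hx', hB.adj_path_iff hu (hle x) (hle x')]

theorem eq_of_path_eq_path (hB : Branches G r ℓ y w I) {u' : V} (hu : u ∈ I) (hu' : u' ∈ I)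
    {a b : ℕ} (ha : a ≤ ℓ) (hb : b ≤ ℓ) (h : y u a = y u' b) : a = b := by
  have := congrArg (G.dist r) h
  rw [hB.dist_path u hu a ha, hB.dist_path u' hu' b hb] at this
  omega

theorem fork_ne_path (hB : Branches G r ℓ y w I) {u' : V} (hu : u ∈ I) (hu' : u' ∈ I) {b : ℕ}
    (hb : b ≤ ℓ) : w u ≠ y u' b := by
  intro h
  rcases Nat.eq_zero_or_pos b with rfl | hb₀
  · exact hB.ne_fork u' hu' u hu (by rw [h, hB.path_zero u' hu'])
  · have := hB.le_dist_fork u hu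
    rw [h, hB.dist_path u' hu' b hb] at this
    omega

theorem path_ne_path (hB : Branches G r ℓ y w I) {u' : V} (hu : u ∈ I) (hu' : u' ∈ I)
    (hpℓ : p < ℓ) (hpair : ∀ a ≤ p, ∀ b ≤ p, G.Adj (y u a) (y u' b) ↔ a = p ∧ b = p)
    {a b : ℕ} (ha : a ≤ p) (hb : b ≤ p) : y u a ≠ y u' b := by
  intro h
  obtain rfl := hB.eq_of_path_eq_path hu hu' (by omega) (by omega) h
  rcases ha.lt_or_eq with ha | rfl
  · have hadj := hB.adj_path u' hu' a (by omega)
    rw [← h] at hadj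
    have := (hpair a ha.le (a + 1) ha).mp hadj
    omega
  · exact G.irrefl (h ▸ (hpair a le_rfl a le_rfl).mpr ⟨rfl, rfl⟩)

theorem eq_of_forkVertex_eq (hB : Branches G r ℓ y w I) {u' : V} (hu : u ∈ I) (hu' : u' ∈ I)
    (hpℓ : p < ℓ)
    (hpair : u ≠ u' → ∀ a ≤ p, ∀ b ≤ p, G.Adj (y u a) (y u' b) ↔ a = p ∧ b = p)
    {x x' : Fin p ⊕ Fin 2} (h : forkVertex y w p u x = forkVertex y w p u' x') :
    u = u' ∧ x = x' := by
  have hle : ∀ x : Fin p ⊕ Fin 2, Tgraph.level p x ≤ ℓ := fun x => Tgraph.level_le.trans hpℓ.le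
  by_cases hx : x = .inr 1 <;> by_cases hx' : x' = .inr 1
  · subst hx hx'
    exact ⟨hB.injOn_fork hu hu' h, rfl⟩
  · subst hx
    rw [forkVertex_inr_one, forkVertex_of_ne (hB.path_zero u' hu') hx'] at h
    exact absurd h (hB.fork_ne_path hu hu' (hle x'))
  · subst hx'
    rw [forkVertex_inr_one, forkVertex_of_ne (hB.path_zero u hu) hx] at h
    exact absurd h.symm (hB.fork_ne_path hu' hu (hle x))
  · rw [forkVertex_of_ne (hB.path_zero u hu) hx, forkVertex_of_ne (hB.path_zero u' hu') hx'] at h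
    refine ⟨by_contra fun hne => ?_, Tgraph.eq_of_level_eq hx hx'
      (hB.eq_of_path_eq_path hu hu' (hle x) (hle x') h)⟩
    exact hB.path_ne_path hu hu' hpℓ (hpair hne) Tgraph.level_le Tgraph.level_le h

theorem forkVertex_adj_forkVertex_iff (hB : Branches G r ℓ y w I) {u' : V} (hu : u ∈ I)
    (hu' : u' ∈ I) (hne : u ≠ u') (hp : 1 ≤ p) (hpℓ : p < ℓ)
    (hpair : ∀ a ≤ p, ∀ b ≤ p, G.Adj (y u a) (y u' b) ↔ a = p ∧ b = p)
    {x x' : Fin p ⊕ Fin 2} :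
    G.Adj (forkVertex y w p u x) (forkVertex y w p u' x') ↔
      Tgraph.level p x = p ∧ Tgraph.level p x' = p := by
  have hle : ∀ x : Fin p ⊕ Fin 2, Tgraph.level p x ≤ ℓ := fun x => Tgraph.level_le.trans hpℓ.le
  have hlev : Tgraph.level p (.inr 1 : Fin p ⊕ Fin 2) ≠ p := by simp [Tgraph.level]; omega
  by_cases hx : x = .inr 1
  · subst hx
    refine iff_of_false ?_ fun h => hlev h.1
    rw [forkVertex_inr_one]
    by_cases hx' : x' = .inr 1
    · subst hx'
      exact hB.fork_not_adj_fork u hu u' hu' (hB.injOn_fork.ne hu hu' hne)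
    · rw [forkVertex_of_ne (hB.path_zero u' hu') hx']
      exact hB.fork_not_adj_path hu hu' hne (hle x')
  · by_cases hx' : x' = .inr 1
    · subst hx'
      refine iff_of_false (fun h => ?_) fun h => hlev h.2
      rw [forkVertex_inr_one, forkVertex_of_ne (hB.path_zero u hu) hx] at h
      exact hB.fork_not_adj_path hu' hu hne.symm (hle x) h.symm
    · rw [forkVertex_of_ne (hB.path_zero u hu) hx, forkVertex_of_ne (hB.path_zero u' hu') hx']
      exact hpair _ Tgraph.level_le _ Tgraph.level_le

theorem nonempty_Ktilde_embedding (hB : Branches G r ℓ y w I) (hp : 1 ≤ p) (hpℓ : p < ℓ)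
    (e : Fin n ↪ V) (he : ∀ i, e i ∈ I)
    (hcross : ∀ i j, i ≠ j → ∀ a ≤ p, ∀ b ≤ p, G.Adj (y (e i) a) (y (e j) b) ↔ a = p ∧ b = p) :
    Nonempty (Ktilde n p ↪g G) := by
  refine _root_.nonempty_Ktilde_embedding hp (fun q => forkVertex y w p (e q.1) q.2) ?_
    (fun i x x' => hB.forkVertex_adj_iff (he i) hpℓ) fun i j hij x x' =>
      hB.forkVertex_adj_forkVertex_iff (he i) (he j) (e.injective.ne hij) hp hpℓ (hcross i j hij)
  rintro ⟨i, x⟩ ⟨j, x'⟩ h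
  obtain ⟨hij, rfl⟩ := hB.eq_of_forkVertex_eq (he i) (he j) hpℓ
    (fun hne => hcross i j (ne_of_apply_ne e hne)) h
  rw [e.injective hij]

end Branches

/-- A family of branches of this size survives `t` more rounds of pruning and Ramsey. -/
def levelBound (n : ℕ) : ℕ → ℕ
  | 0 => n
  | t + 1 => (2 * n + 1) * 2 ^ (n + levelBound n t)

theorem levelBound_mono (n : ℕ) : Monotone (levelBound n) :=
  monotone_nat_of_le_succ fun t =>
    calc levelBound n t ≤ 2 ^ (n + levelBound n t) :=
          (Nat.lt_two_pow_self).le.trans (Nat.pow_le_pow_right two_pos (by omega))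
      _ ≤ (2 * n + 1) * 2 ^ (n + levelBound n t) := Nat.le_mul_of_pos_left _ (by omega)

theorem Branches.false_of_noCrossEdges (hstar : ¬ Nonempty (_root_.starGraph n ↪g G))
    (hkt : ∀ p, 1 ≤ p → ¬ Nonempty (Ktilde n p ↪g G)) (t : ℕ) :
    ∀ s I, Branches G r ℓ y w I → s + 1 + t = ℓ → NoCrossEdges G y I s →
      levelBound n t ≤ #I → False := by
  induction t with
  | zero =>
    intro s I hB hs h hI
    -- the level-`s` vertices are pairwise nonadjacent neighbours of `r`
    refine (card_lt_of_forall_adj hstar (v := r) (hB.injOn_of_noCrossEdges (by omega) h)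
      (fun u hu u' hu' hne => h u hu u' hu' hne s le_rfl s le_rfl) fun u hu => ?_).not_ge hI
    rw [← dist_eq_one_iff_adj, hB.dist_path u hu s (by omega)]
    omega
  | succ t ih =>
    intro s I hB hs h hI
    obtain ⟨J, hJI, hcard, hJ⟩ := hB.exists_prune hstar (by omega) h
    rcases exists_pairwise_or_pairwise_not_of_two_pow_le
        (fun u u' => G.Adj (y u (s + 1)) (y u' (s + 1))) (fun _ _ h => h.symm) n _ J
        (Nat.le_of_mul_le_mul_left (hI.trans hcard) (by omega)) with
      ⟨T, hTJ, hT, hclique⟩ | ⟨T, hTJ, hT, hindep⟩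
    · obtain ⟨e, he⟩ := Function.Embedding.exists_of_card_le_finset (α := Fin n) (by simpa using hT)
      have heT : ∀ i, e i ∈ T := fun i => he ⟨i, rfl⟩
      refine hkt (s + 1) (by omega) ((hB.mono (hTJ.trans hJI)).nonempty_Ktilde_embedding
        (by omega) (by omega) e heT fun i j hij a ha b hb =>
          ⟨hJ _ (hTJ (heT i)) _ (hTJ (heT j)) (e.injective.ne hij) a ha b hb, ?_⟩)
      rintro ⟨rfl, rfl⟩
      exact hclique (heT i) (heT j) (e.injective.ne hij)
    · refine ih (s + 1) T (hB.mono (hTJ.trans hJI)) (by omega)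
        (fun u hu u' hu' hne a ha b hb hadj => ?_) hT
      obtain ⟨rfl, rfl⟩ := hJ u (hTJ hu) u' (hTJ hu') hne a ha b hb hadj
      exact hindep hu hu' hne hadj

end Geodesics

section Construction

variable {V : Type*} [Fintype V] [DecidableEq V] {G : SimpleGraph V} {f : V → V}

theorem IsOptimalMatchingInv.forks {r : V} {ℓ : ℕ} (hf : IsOptimalMatchingInv G r f) (hℓ : 0 < ℓ)
    {U : Finset V} (hU : ∀ u ∈ U, f u = u ∧ G.dist r u = ℓ) {y : V → ℕ → V}
    (hy : ∀ u ∈ U, y u 0 = u ∧ (∀ a ≤ ℓ, G.dist r (y u a) = ℓ - a) ∧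
      ∀ a < ℓ, G.Adj (y u a) (y u (a + 1))) :
    Forks G r ℓ y (fun u => f (y u 1)) U := by
  have hinv := hf.involutive
  have hadj : ∀ u ∈ U, G.Adj u (y u 1) := fun u hu => by
    simpa [(hy u hu).1] using (hy u hu).2.2 0 (by omega)
  have hdist : ∀ u ∈ U, G.dist r (y u 1) = ℓ - 1 := fun u hu => (hy u hu).2.1 1 (by omega)
  have hne_r : ∀ u ∈ U, u ≠ r := fun u hu h => by
    have := (hU u hu).2
    rw [h, dist_self] at this
    omega
  have hmatched : ∀ u ∈ U, f (y u 1) ≠ y u 1 := fun u hu h =>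
    hf.not_adj (hU u hu).1 h (hadj u hu)
  have hdist_fork : ∀ u ∈ U, ℓ ≤ G.dist r (f (y u 1)) := fun u hu => (hU u hu).2 ▸
    hf.dist_le_dist_partner (hU u hu).1 (hne_r u hu) (hadj u hu) (hmatched u hu)
  refine
    { path_zero := fun u hu => (hy u hu).1
      dist_path := fun u hu => (hy u hu).2.1
      adj_path := fun u hu => (hy u hu).2.2
      adj_fork := fun u hu => hf.adj _ (hmatched u hu)
      le_dist_fork := hdist_fork
      not_adj_fork := fun u hu => hf.not_adj_partner_of_dist_lt (hU u hu).1 (hne_r u hu)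
        (hmatched u hu) (by rw [hdist u hu, (hU u hu).2]; omega)
      ne_fork := fun u hu u' hu' h => ?_
      root_not_adj_root := fun u hu u' hu' _ => hf.not_adj (hU u hu).1 (hU u' hu').1
      root_not_adj_fork := fun u hu u' hu' hne => ?_
      fork_not_adj_fork := fun u hu u' hu' hne => ?_
      path_one_eq_of_fork_eq := fun _ _ _ _ h => hinv.injective h }
  · have := (hU u hu).1
    rw [h, hinv] at this
    exact hmatched u' hu' this.symm
  · exact hf.not_adj_partner (hU u hu).1 (hU u' hu').1 hne (hmatched u' hu') (hadj u' hu').symm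
  · have hcc : y u 1 ≠ y u' 1 := fun h => hne (by rw [h])
    refine hf.not_adj_partner_partner (hU u hu).1 (hU u' hu').1 (fun h => hcc (h ▸ rfl))
      (hmatched u hu) (hmatched u' hu') hcc (fun h => ?_) (hadj u hu) (hadj u' hu').symm
    have := hdist_fork u' hu'
    rw [← h, hdist u hu] at this
    omega

end Construction

def deficiencyBound (n N : ℕ) : ℕ := N * ((2 * (n * n) + 1) * levelBound n N)

/-- There is a function `f(n, N)` such that for all integers `n > 3` and `N > 3`, every
connected graph `G` of diameter at most `N` containing no induced `K_{1,n}` and no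
induced `K̃ₙᵖ` for any `p ≥ 1` satisfies `def(G) ≤ f(n, N)`. -/
theorem deficiency_bounded_of_bounded_diam :
    ∃ f : ℕ → ℕ → ℕ, ∀ (n N : ℕ), 3 < n → 3 < N →
      ∀ (V : Type) [Fintype V] (G : SimpleGraph V), G.Connected →
        (∀ x y : V, G.dist x y ≤ N) →
        ¬ Nonempty (_root_.starGraph n ↪g G) →
        (∀ p : ℕ, 1 ≤ p → ¬ Nonempty (Ktilde n p ↪g G)) →
        deficiency G ≤ f n N := by
  refine ⟨deficiencyBound, fun n N _ hN V _ G hconn hdiam hstar hkt => ?_⟩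
  classical
  by_contra! hdef
  obtain ⟨r, f, hf, hcard⟩ := exists_isOptimalMatchingInv_of_lt_deficiency hdef
  obtain ⟨ℓ, hℓ, hℓN, hU⟩ := exists_le_card_filter_dist_eq hconn (by omega) hdiam r hcard
  choose y hy using fun u => (hconn.preconnected r u).exists_geodesic
  obtain ⟨I, -, hIcard, hB⟩ := (hf.forks hℓ (y := y) (U := {u ∈ exposed f | G.dist r u = ℓ})
    (fun u hu => by simpa using hu) fun u hu => (mem_filter.mp hu).2 ▸ hy u).exists_branches
      (by omega) hstar
  refine hB.false_of_noCrossEdges hstar hkt (ℓ - 1) 0 I (by omega) hB.noCrossEdges_zero ?_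
  exact (levelBound_mono n (by omega : ℓ - 1 ≤ N)).trans
    (Nat.le_of_mul_le_mul_left (hU.trans hIcard) (by omega))
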